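/- arXiv:1108.2223 — 2 statements merged into one kernel-verified Lean document; each statement's English description precedes it below -/
import Mathlib

section
/- Let α, β ∈ ℂ be nonzero, Δ(ξ) = αξ² + αβξ + β, x(ξ) = (αξ² + α(β−1)ξ)/Δ(ξ) and y(ξ) = (β(α−1)ξ + β)/Δ(ξ). Then for every ξ with Δ(ξ) ≠ 0 and x(ξ)·y(ξ) ≠ 0, one has ((x(ξ)−1)(x(ξ)−α)(y(ξ)−1)(y(ξ)−β))/(x(ξ)·y(ξ)) = ((αξ+β)²(ξ+β)(1+αξ))/Δ(ξ)². Equivalently, as a polynomial identity after clearing denominators: (x(ξ)−1)(x(ξ)−α)(y(ξ)−1)(y(ξ)−β)·Δ(ξ)² = x(ξ)·y(ξ)·(αξ+β)²(ξ+β)(1+αξ). -/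
/-! Writing `x = X/Δ`, `y = Y/Δ` with `X = αξ(ξ + β - 1)` and `Y = β((α - 1)ξ + 1)`, each factor of
the Kummer equation is a multiple of `Δ⁻¹` by a product of linear forms in `ξ`:
`X - Δ = -(αξ + β)`, `X - αΔ = -α(ξ + β)((α - 1)ξ + 1)`, `Y - Δ = -ξ(αξ + β)` and
`Y - βΔ = -β(1 + αξ)(ξ + β - 1)`. Their product is `X Y (αξ + β)² (ξ + β)(1 + αξ)`, which gives the
identity after dividing by `Δ⁴`. -/

section

variable {K : Type*}

theorem kummer_numerator_factorization [CommRing K] (α β ξ : K) :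
    let Δ := α * ξ ^ 2 + α * β * ξ + β
    let X := α * ξ ^ 2 + α * (β - 1) * ξ
    let Y := β * (α - 1) * ξ + β
    (X - Δ) * (X - α * Δ) * (Y - Δ) * (Y - β * Δ)
      = X * Y * ((α * ξ + β) ^ 2 * (ξ + β) * (1 + α * ξ)) := by
  intro Δ X Y
  ring

theorem kummer_product_div_mul_sq [Field K] {X Y Δ a b c : K} (hΔ : Δ ≠ 0)
    (h : (X - Δ) * (X - a * Δ) * (Y - Δ) * (Y - b * Δ) = X * Y * c) :
    (X / Δ - 1) * (X / Δ - a) * (Y / Δ - 1) * (Y / Δ - b) * Δ ^ 2 = X / Δ * (Y / Δ) * c := by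
  field_simp
  linear_combination h

end

theorem I1_fiber_equation_general (α β ξ : ℂ)
    (hΔ : α * ξ ^ 2 + α * β * ξ + β ≠ 0) :
    let Δ := α * ξ ^ 2 + α * β * ξ + β
    let x := (α * ξ ^ 2 + α * (β - 1) * ξ) / Δ
    let y := (β * (α - 1) * ξ + β) / Δ
    (x - 1) * (x - α) * (y - 1) * (y - β) * Δ ^ 2
        = x * y * ((α * ξ + β) ^ 2 * (ξ + β) * (1 + α * ξ)) ∧
    (x * y ≠ 0 →
      (x - 1) * (x - α) * (y - 1) * (y - β) / (x * y)
        = (α * ξ + β) ^ 2 * (ξ + β) * (1 + α * ξ) / Δ ^ 2) := by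
  intro Δ x y
  have cleared := kummer_product_div_mul_sq hΔ (kummer_numerator_factorization α β ξ)
  exact ⟨cleared, fun hxy =>
    (div_eq_div_iff hxy (pow_ne_zero 2 hΔ)).2 (cleared.trans (mul_comm _ _))⟩

/-- Pullback of the Kummer surface equation along the parametrization of `C₁`:
the equation of the `I₁` fiber in the coordinate `ξ`. -/
theorem I1_fiber_equation (α β ξ : ℂ) (hα : α ≠ 0) (hβ : β ≠ 0)
    (hΔ : α * ξ ^ 2 + α * β * ξ + β ≠ 0) :
    let Δ := α * ξ ^ 2 + α * β * ξ + β
    let x := (α * ξ ^ 2 + α * (β - 1) * ξ) / Δ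
    let y := (β * (α - 1) * ξ + β) / Δ
    (x - 1) * (x - α) * (y - 1) * (y - β) * Δ ^ 2
        = x * y * ((α * ξ + β) ^ 2 * (ξ + β) * (1 + α * ξ)) ∧
    (x * y ≠ 0 →
      (x - 1) * (x - α) * (y - 1) * (y - β) / (x * y)
        = (α * ξ + β) ^ 2 * (ξ + β) * (1 + α * ξ) / Δ ^ 2) :=
  I1_fiber_equation_general α β ξ hΔ
end

section
/- Let χ be a real number with 0 < χ ≤ 1/10 and let λ ∈ ℂ with |λ| ≥ χ/2. Then |λ + 2χ|·|λ| ≤ 6·|λ + χ²|·|λ − χ²|. -/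
open Complex

/-! With `t = ‖λ‖`, the triangle inequality gives `‖λ + 2χ‖ ≤ t + 2χ` and
`‖λ + χ²‖‖λ - χ²‖ = ‖λ² - χ⁴‖ ≥ t² - χ⁴`, so it suffices that `5t² - 2χt - 6χ⁴ ≥ 0`.
This quadratic equals `(t - χ/2)(5t + χ/2) + χ²(1/4 - 6χ²)`, which is nonnegative
for `t ≥ χ/2` and `χ ≤ 1/10`. -/

theorem norm_add_ofReal_le (z : ℂ) {r : ℝ} (hr : 0 ≤ r) : ‖z + r‖ ≤ ‖z‖ + r := by
  simpa [abs_of_nonneg hr] using norm_add_le z (r : ℂ)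

theorem sq_norm_sub_sq_norm_le_norm_add_mul_norm_sub {𝕜 : Type*} [NormedField 𝕜] (x y : 𝕜) :
    ‖x‖ ^ 2 - ‖y‖ ^ 2 ≤ ‖x + y‖ * ‖x - y‖ := by
  rw [← norm_mul, ← norm_pow, ← norm_pow, show (x + y) * (x - y) = x ^ 2 - y ^ 2 by ring]
  exact norm_sub_norm_le _ _

theorem mul_add_two_mul_le_six_mul_sq_sub_pow_four {χ t : ℝ} (hχ0 : 0 < χ) (hχ1 : χ ≤ 1 / 10)
    (ht : χ / 2 ≤ t) : (t + 2 * χ) * t ≤ 6 * (t ^ 2 - χ ^ 4) := by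
  have hχsq : 6 * χ ^ 2 ≤ 1 / 4 := by nlinarith
  have key : 6 * (t ^ 2 - χ ^ 4) - (t + 2 * χ) * t
      = (t - χ / 2) * (5 * t + χ / 2) + χ ^ 2 * (1 / 4 - 6 * χ ^ 2) := by ring
  have hfirst : 0 ≤ (t - χ / 2) * (5 * t + χ / 2) := mul_nonneg (by linarith) (by linarith)
  have hsecond : 0 ≤ χ ^ 2 * (1 / 4 - 6 * χ ^ 2) := mul_nonneg (sq_nonneg χ) (by linarith)
  linarith

/-- Key pointwise estimate from the appendix to §6:
for `0 < χ ≤ 1/10` and `|λ| ≥ χ/2`, `|λ+2χ||λ| ≤ 6|λ+χ²||λ−χ²|`. -/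
theorem appendix_pointwise_estimate (χ : ℝ) (hχ0 : 0 < χ) (hχ1 : χ ≤ 1 / 10)
    (l : ℂ) (hl : χ / 2 ≤ ‖l‖) :
    ‖l + 2 * χ‖ * ‖l‖
      ≤ 6 * ‖l + (χ : ℂ) ^ 2‖ * ‖l - (χ : ℂ) ^ 2‖ := by
  have hχsq : ‖(χ : ℂ) ^ 2‖ ^ 2 = χ ^ 4 := by
    rw [norm_pow, Complex.norm_of_nonneg hχ0.le]; ring
  calc ‖l + 2 * χ‖ * ‖l‖
      ≤ (‖l‖ + 2 * χ) * ‖l‖ := by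
        gcongr
        exact_mod_cast norm_add_ofReal_le l (by positivity : (0 : ℝ) ≤ 2 * χ)
    _ ≤ 6 * (‖l‖ ^ 2 - χ ^ 4) := mul_add_two_mul_le_six_mul_sq_sub_pow_four hχ0 hχ1 hl
    _ ≤ 6 * ‖l + (χ : ℂ) ^ 2‖ * ‖l - (χ : ℂ) ^ 2‖ := by
        rw [mul_assoc, ← hχsq]
        gcongr
        exact sq_norm_sub_sq_norm_le_norm_add_mul_norm_sub _ _
end
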